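/- Let z_1,…,z_r ∈ ℤ^d be generating vectors and n_1,…,n_r ≥ 1 integer moduli, let (h_ξ)_{ξ ∈ ℤ_{n_1}×⋯×ℤ_{n_r}} be a minimal anti-aliasing family with image A = { h_ξ }, and let û : ℤ^d → ℂ satisfy Σ_{h ∈ ℤ^d} ‖h‖₂² |û(h)| < ∞. Then ( Σ_{ξ} | Σ_{ℓ ∈ Λ^⊥, ℓ ≠ 0} (‖h_ξ + ℓ‖₂² − ‖h_ξ‖₂²) · û(h_ξ + ℓ) |² )^{1/2} ≤ Σ_{h ∈ ℤ^d∖A} ‖h‖₂² |û(h)|. (This bounds the L₂ norm of the defect, the commutator of the lattice interpolation operator with the Laplacian, applied to the function with Fourier coefficients û.) -/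

import Mathlib

/-! The defect only sees coefficients `û(h_ξ + ℓ)` with `0 ≠ ℓ ∈ Λ^⊥`. Each such `h_ξ + ℓ` lies in
the same residue class as `h_ξ`, so minimality of `h_ξ` gives
`0 ≤ ‖h_ξ + ℓ‖₂² − ‖h_ξ‖₂² ≤ ‖h_ξ + ℓ‖₂²`; the residue class also determines `ξ`, so
`(ξ, ℓ) ↦ h_ξ + ℓ` is injective with image outside `A`. Bounding the `ℓ²`-norm over `ξ` by the
`ℓ¹`-norm, every `h ∉ A` is counted at most once. -/

noncomputable section

/-- Integer dot product on `ℤ^d`. -/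
def dotZ {d : ℕ} (h z : Fin d → ℤ) : ℤ := ∑ i, h i * z i

/-- Membership in the dual lattice `Λ^⊥`. -/
def InDual {d r : ℕ} (z : Fin r → Fin d → ℤ) (n : Fin r → ℕ) (h : Fin d → ℤ) : Prop :=
  ∀ j, (n j : ℤ) ∣ dotZ h (z j)

/-- The squared Euclidean norm `‖h‖₂² = Σ_j h_j²` of `h ∈ ℤ^d`. -/
def normSq {d : ℕ} (h : Fin d → ℤ) : ℝ := ∑ j, (h j : ℝ) ^ 2

theorem Real.sqrt_sum_sq_le_sum {ι : Type*} {s : Finset ι} {a : ι → ℝ}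
    (ha : ∀ i ∈ s, 0 ≤ a i) : √(∑ i ∈ s, a i ^ 2) ≤ ∑ i ∈ s, a i :=
  Real.sqrt_le_iff.mpr ⟨Finset.sum_nonneg ha, Finset.sum_sq_le_sq_sum_of_nonneg ha⟩

theorem sum_tsum_le_tsum_of_injective {α β γ : Type*} [Fintype α] {f : β → ℝ}
    (hf : Summable f) (hf0 : ∀ b, 0 ≤ f b) {e : α × γ → β} (he : Function.Injective e) :
    ∑ a, ∑' c, f (e (a, c)) ≤ ∑' b, f b := by
  have hfe : Summable (f ∘ e) := hf.comp_injective he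
  calc ∑ a, ∑' c, f (e (a, c))
      = ∑' p, (f ∘ e) p := by
        rw [hfe.tsum_prod' fun a => hfe.comp_injective (Prod.mk_right_injective a), tsum_fintype]
        rfl
    _ ≤ ∑' b, f b := tsum_comp_le_tsum_of_inj hf hf0 he

theorem dotZ_add {d : ℕ} (a b z : Fin d → ℤ) : dotZ (a + b) z = dotZ a z + dotZ b z := by
  simp only [dotZ, Pi.add_apply, add_mul, Finset.sum_add_distrib]

theorem normSq_nonneg {d : ℕ} (h : Fin d → ℤ) : 0 ≤ normSq h :=
  Finset.sum_nonneg fun _ _ => sq_nonneg _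

section Residues

variable {d r : ℕ} {z : Fin r → Fin d → ℤ} {n : Fin r → ℕ}

def HasResidue (z : Fin r → Fin d → ℤ) (n : Fin r → ℕ) (h : Fin d → ℤ)
    (ξ : (j : Fin r) → Fin (n j)) : Prop :=
  ∀ j, (dotZ h (z j) : ZMod (n j)) = ((ξ j : ℕ) : ZMod (n j))

theorem HasResidue.add_of_inDual {h ℓ : Fin d → ℤ} {ξ : (j : Fin r) → Fin (n j)}
    (hh : HasResidue z n h ξ) (hℓ : InDual z n ℓ) : HasResidue z n (h + ℓ) ξ := by
  intro j
  rw [dotZ_add, Int.cast_add, (ZMod.intCast_zmod_eq_zero_iff_dvd _ _).mpr (hℓ j), add_zero]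
  exact hh j

theorem HasResidue.unique {h : Fin d → ℤ} {ξ ξ' : (j : Fin r) → Fin (n j)}
    (hξ : HasResidue z n h ξ) (hξ' : HasResidue z n h ξ') : ξ = ξ' := by
  funext j
  have hval := congrArg ZMod.val ((hξ j).symm.trans (hξ' j))
  rwa [ZMod.val_natCast_of_lt (ξ j).2, ZMod.val_natCast_of_lt (ξ' j).2, ← Fin.ext_iff] at hval

variable {hfam : ((j : Fin r) → Fin (n j)) → Fin d → ℤ}

theorem add_inDual_injective (hcong : ∀ ξ, HasResidue z n (hfam ξ) ξ) :
    Function.Injective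
      fun p : ((j : Fin r) → Fin (n j)) × {ℓ : Fin d → ℤ // ℓ ≠ 0 ∧ InDual z n ℓ} =>
        hfam p.1 + p.2.1 := by
  rintro ⟨ξ, ℓ, _, hℓ⟩ ⟨ξ', ℓ', _, hℓ'⟩ heq
  dsimp only at heq
  obtain rfl : ξ = ξ' :=
    ((hcong ξ).add_of_inDual hℓ).unique (heq ▸ (hcong ξ').add_of_inDual hℓ')
  obtain rfl : ℓ = ℓ' := add_left_cancel heq
  rfl

theorem add_inDual_notMem_range (hcong : ∀ ξ, HasResidue z n (hfam ξ) ξ)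
    {ξ : (j : Fin r) → Fin (n j)} {ℓ : Fin d → ℤ} (hℓ0 : ℓ ≠ 0) (hℓ : InDual z n ℓ) :
    hfam ξ + ℓ ∉ Set.range hfam := by
  rintro ⟨ξ', hξ'⟩
  obtain rfl : ξ' = ξ := (hξ' ▸ hcong ξ').unique ((hcong ξ).add_of_inDual hℓ)
  exact hℓ0 (left_eq_add.mp hξ')

theorem abs_normSq_add_inDual_sub_le (hcong : ∀ ξ, HasResidue z n (hfam ξ) ξ)
    (hmin : ∀ ξ h, HasResidue z n h ξ → normSq (hfam ξ) ≤ normSq h)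
    (ξ : (j : Fin r) → Fin (n j)) {ℓ : Fin d → ℤ} (hℓ : InDual z n ℓ) :
    |normSq (hfam ξ + ℓ) - normSq (hfam ξ)| ≤ normSq (hfam ξ + ℓ) := by
  have hle := hmin ξ _ ((hcong ξ).add_of_inDual hℓ)
  rw [abs_of_nonneg (sub_nonneg.mpr hle)]
  linarith [normSq_nonneg (hfam ξ)]

end Residues

theorem defect_bound_general
    (d r : ℕ)
    (z : Fin r → Fin d → ℤ) (n : Fin r → ℕ)
    (hfam : ((j : Fin r) → Fin (n j)) → Fin d → ℤ)
    (hcong : ∀ ξ j, ((dotZ (hfam ξ) (z j) : ZMod (n j))) = ((ξ j : ℕ) : ZMod (n j)))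
    (hmin : ∀ ξ (h : Fin d → ℤ),
      (∀ j, ((dotZ h (z j) : ZMod (n j))) = ((ξ j : ℕ) : ZMod (n j))) →
      normSq (hfam ξ) ≤ normSq h)
    (uhat : (Fin d → ℤ) → ℂ)
    (hu : Summable fun m : Fin d → ℤ => normSq m * ‖uhat m‖) :
    Real.sqrt (∑ ξ : (j : Fin r) → Fin (n j),
        ‖∑' ℓ : {ℓ : Fin d → ℤ // ℓ ≠ 0 ∧ InDual z n ℓ},
            ((normSq (hfam ξ + ℓ.1) - normSq (hfam ξ) : ℝ) : ℂ) * uhat (hfam ξ + ℓ.1)‖ ^ 2)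
      ≤ ∑' h : {h : Fin d → ℤ // h ∉ Set.range hfam}, normSq h.1 * ‖uhat h.1‖ := by
  have hterm : ∀ ξ (ℓ : {ℓ : Fin d → ℤ // ℓ ≠ 0 ∧ InDual z n ℓ}),
      ‖((normSq (hfam ξ + ℓ.1) - normSq (hfam ξ) : ℝ) : ℂ) * uhat (hfam ξ + ℓ.1)‖
        ≤ normSq (hfam ξ + ℓ.1) * ‖uhat (hfam ξ + ℓ.1)‖ := fun ξ ℓ => by
    rw [norm_mul, Complex.norm_real, Real.norm_eq_abs]
    exact mul_le_mul_of_nonneg_right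
      (abs_normSq_add_inDual_sub_le hcong hmin ξ ℓ.2.2) (norm_nonneg _)
  have hsummable : ∀ ξ, Summable fun ℓ : {ℓ : Fin d → ℤ // ℓ ≠ 0 ∧ InDual z n ℓ} =>
      normSq (hfam ξ + ℓ.1) * ‖uhat (hfam ξ + ℓ.1)‖ := fun ξ =>
    hu.comp_injective fun ℓ ℓ' heq => Subtype.ext (add_left_cancel heq)
  have hcompl : Summable fun h : {h // h ∉ Set.range hfam} => normSq h.1 * ‖uhat h.1‖ :=
    hu.subtype _
  calc _ ≤ ∑ ξ, ‖∑' ℓ : {ℓ : Fin d → ℤ // ℓ ≠ 0 ∧ InDual z n ℓ},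
            ((normSq (hfam ξ + ℓ.1) - normSq (hfam ξ) : ℝ) : ℂ) * uhat (hfam ξ + ℓ.1)‖ :=
        Real.sqrt_sum_sq_le_sum fun _ _ => norm_nonneg _
    _ ≤ ∑ ξ, ∑' ℓ : {ℓ : Fin d → ℤ // ℓ ≠ 0 ∧ InDual z n ℓ},
          normSq (hfam ξ + ℓ.1) * ‖uhat (hfam ξ + ℓ.1)‖ :=
        Finset.sum_le_sum fun ξ _ => tsum_of_norm_bounded (hsummable ξ).hasSum (hterm ξ)
    _ ≤ _ :=
        sum_tsum_le_tsum_of_injective hcompl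
          (fun h => mul_nonneg (normSq_nonneg h.1) (norm_nonneg _))
          (e := fun p : ((j : Fin r) → Fin (n j)) × {ℓ : Fin d → ℤ // ℓ ≠ 0 ∧ InDual z n ℓ} =>
            (⟨hfam p.1 + p.2.1, add_inDual_notMem_range hcong p.2.2.1 p.2.2.2⟩ :
              {h // h ∉ Set.range hfam}))
          fun _ _ heq => add_inDual_injective hcong (congrArg Subtype.val heq :)

/-- **Defect bound.** For a minimal anti-aliasing family `(h_ξ)` with image `A`
and coefficients `û` with `Σ_h ‖h‖₂²|û(h)| < ∞`,
`(Σ_ξ |Σ_{0 ≠ ℓ ∈ Λ^⊥} (‖h_ξ+ℓ‖₂² − ‖h_ξ‖₂²) û(h_ξ+ℓ)|²)^{1/2}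
  ≤ Σ_{h ∉ A} ‖h‖₂² |û(h)|`. -/
theorem defect_bound
    (d r : ℕ) (hr : 1 ≤ r)
    (z : Fin r → Fin d → ℤ) (n : Fin r → ℕ) (hn : ∀ j, 1 ≤ n j)
    (hfam : ((j : Fin r) → Fin (n j)) → Fin d → ℤ)
    (hcong : ∀ ξ j, ((dotZ (hfam ξ) (z j) : ZMod (n j))) = ((ξ j : ℕ) : ZMod (n j)))
    (hmin : ∀ ξ (h : Fin d → ℤ),
      (∀ j, ((dotZ h (z j) : ZMod (n j))) = ((ξ j : ℕ) : ZMod (n j))) →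
      normSq (hfam ξ) ≤ normSq h)
    (uhat : (Fin d → ℤ) → ℂ)
    (hu : Summable fun m : Fin d → ℤ => normSq m * ‖uhat m‖) :
    Real.sqrt (∑ ξ : (j : Fin r) → Fin (n j),
        ‖∑' ℓ : {ℓ : Fin d → ℤ // ℓ ≠ 0 ∧ InDual z n ℓ},
            ((normSq (hfam ξ + ℓ.1) - normSq (hfam ξ) : ℝ) : ℂ) * uhat (hfam ξ + ℓ.1)‖ ^ 2)
      ≤ ∑' h : {h : Fin d → ℤ // h ∉ Set.range hfam}, normSq h.1 * ‖uhat h.1‖ :=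
  defect_bound_general d r z n hfam hcong hmin uhat hu

end
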